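/- Let 0 ≤ α < n and let μ be a positive locally finite Borel measure on ℝⁿ. (i) If J, K, I are cubes with J ⊆ K, 2K ⊆ I, and μ(I) = 0, then c · P^α(J,μ)/ℓ(J) ≤ P^α(K,μ)/ℓ(K) ≤ C · P^α(J,μ)/ℓ(J), where 0 < c ≤ C depend only on n and α. (ii) If J, K, I are cubes with 2J ⊆ K ⊆ I and μ(I) = 0, then P^α(K,μ)/ℓ(K) ≤ C · P^α(J,μ)/ℓ(J), with C depending only on n and α. -/

import Mathlib

/-!
`P^α(Q,μ)/ℓ(Q)` is the integral of `(ℓ(Q) + |y - c_Q|)^{-p}` with `p = n + 1 - α ≥ 0`, so it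
suffices to compare the weights `ℓ(J) + |y - c_J|` and `ℓ(K) + |y - c_K|` pointwise. If
`J ⊆ K` then `c_J ∈ K`, so `|c_J - c_K| ≤ √n ℓ(K)` and `ℓ(J) ≤ ℓ(K)`, whence
`ℓ(J) + |y - c_J| ≤ (1 + √n)(ℓ(K) + |y - c_K|)` for every `y`. Conversely, a point `y` outside
`2K` is at distance at least `ℓ(K)/2` from `c_J ∈ K`, which gives
`ℓ(K) + |y - c_K| ≤ (3 + 2√n)(ℓ(J) + |y - c_J|)`; when `μ(2K) = 0` this holds `μ`-a.e.
-/

open MeasureTheory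
open scoped ENNReal NNReal

noncomputable section

/-- An axis-parallel half-open cube in `ℝⁿ`, given by its corner `a` and side length `l`. -/
structure QCube (n : ℕ) where
  a : Fin n → ℝ
  l : ℝ

/-- The half-open cube as a subset of `ℝⁿ`. -/
def QCube.pts {n : ℕ} (Q : QCube n) : Set (EuclideanSpace ℝ (Fin n)) :=
  {x | ∀ i, Q.a i ≤ x i ∧ x i < Q.a i + Q.l}

/-- The center of a cube. -/
def QCube.center {n : ℕ} (Q : QCube n) : EuclideanSpace ℝ (Fin n) :=
  (EuclideanSpace.equiv (Fin n) ℝ).symm fun i => Q.a i + Q.l / 2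

/-- The concentric dilate `γQ` of a cube `Q`. -/
def QCube.dilate {n : ℕ} (Q : QCube n) (γ : ℝ) : QCube n :=
  ⟨fun i => Q.a i + Q.l / 2 - γ * Q.l / 2, γ * Q.l⟩

/-- The `m`-weighted `α`-fractional Poisson integral
`P^α_m(Q,μ) = ∫ ℓ(Q)^m / (ℓ(Q)+|y−c_Q|)^{n+m−α} dμ(y)`; `P^α = P^α_1`. -/
def poissonM {n : ℕ} (α m : ℝ) (Q : QCube n)
    (μ : Measure (EuclideanSpace ℝ (Fin n))) : ℝ≥0∞ :=
  ∫⁻ y, ENNReal.ofReal (Q.l ^ m / (Q.l + dist y Q.center) ^ ((n : ℝ) + m - α)) ∂μ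

lemma EuclideanSpace.dist_le_sqrt_card_mul {ι : Type*} [Fintype ι] {x y : EuclideanSpace ℝ ι}
    {r : ℝ} (hr : 0 ≤ r) (h : ∀ i, dist (x i) (y i) ≤ r) :
    dist x y ≤ √(Fintype.card ι) * r := by
  rw [EuclideanSpace.dist_eq]
  calc √(∑ i, dist (x i) (y i) ^ 2) ≤ √(∑ _i : ι, r ^ 2) := by
        gcongr with i
        exact h i
    _ = √(Fintype.card ι) * r := by
        simp [Real.sqrt_mul, Real.sqrt_sq hr]

lemma MeasureTheory.lintegral_ofReal_one_div_rpow_le {X : Type*} [MeasurableSpace X]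
    {μ : Measure X} {f g : X → ℝ} {p M : ℝ} (hp : 0 ≤ p) (hM : 0 ≤ M)
    (hf : ∀ y, 0 < f y) (hg : ∀ y, 0 < g y) (h : ∀ᵐ y ∂μ, f y ≤ M * g y) :
    ∫⁻ y, ENNReal.ofReal (1 / g y ^ p) ∂μ
      ≤ ENNReal.ofReal (M ^ p) * ∫⁻ y, ENNReal.ofReal (1 / f y ^ p) ∂μ := by
  rw [← lintegral_const_mul' _ _ ENNReal.ofReal_ne_top]
  refine lintegral_mono_ae ?_
  filter_upwards [h] with y hy
  rw [← ENNReal.ofReal_mul (by positivity)]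
  refine ENNReal.ofReal_le_ofReal ?_
  rw [mul_one_div, div_le_div_iff₀ (Real.rpow_pos_of_pos (hg y) p) (Real.rpow_pos_of_pos (hf y) p),
    one_mul, ← Real.mul_rpow hM (hg y).le]
  exact Real.rpow_le_rpow (hf y).le hy hp

namespace QCube

variable {n : ℕ}

lemma center_apply (Q : QCube n) (i : Fin n) : Q.center i = Q.a i + Q.l / 2 := rfl

lemma center_mem_pts {Q : QCube n} (hQ : 0 < Q.l) : Q.center ∈ Q.pts := fun i => by
  rw [center_apply]
  constructor <;> linarith

lemma pts_subset_dilate_two (Q : QCube n) : Q.pts ⊆ (Q.dilate 2).pts :=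
  fun x hx i => by
    have := hx i
    simp only [dilate]
    constructor <;> linarith

lemma l_le_of_pts_subset (hn : 0 < n) {Q R : QCube n} (hQ : 0 < Q.l) (h : Q.pts ⊆ R.pts) :
    Q.l ≤ R.l := by
  let i : Fin n := ⟨0, hn⟩
  have hIco : Set.Ico (Q.a i) (Q.a i + Q.l) ⊆ Set.Ico (R.a i) (R.a i + R.l) := by
    intro t ht
    have hx : WithLp.toLp 2 (Function.update Q.a i t) ∈ Q.pts := by
      intro j
      rcases eq_or_ne j i with rfl | hj
      · simpa using ht
      · simp only [Function.update_of_ne hj]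
        constructor <;> linarith
    simpa using h hx i
  have := (Set.Ico_subset_Ico_iff (by linarith)).mp hIco
  linarith

lemma dist_center_le {Q : QCube n} (hQ : 0 ≤ Q.l) {x : EuclideanSpace ℝ (Fin n)}
    (hx : x ∈ Q.pts) : dist x Q.center ≤ √n * Q.l := by
  simpa using EuclideanSpace.dist_le_sqrt_card_mul (x := x) hQ fun i => by
    have := hx i
    rw [Real.dist_eq, center_apply, abs_le]
    constructor <;> linarith

lemma half_l_le_dist_of_notMem_dilate_two {Q : QCube n} {x y : EuclideanSpace ℝ (Fin n)}
    (hx : x ∈ Q.pts) (hy : y ∉ (Q.dilate 2).pts) : Q.l / 2 ≤ dist y x := by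
  simp only [pts, dilate, Set.mem_ofPred_eq, not_forall, not_and_or, not_le, not_lt] at hy
  obtain ⟨i, hi⟩ := hy
  have hxi := hx i
  refine le_trans ?_ (PiLp.dist_apply_le y x i)
  rw [Real.dist_eq, le_abs]
  rcases hi with hi | hi
  · right; linarith
  · left; linarith

lemma l_add_dist_center_le {J K : QCube n} (hK : 0 ≤ K.l) (hJK : J.l ≤ K.l)
    (hc : J.center ∈ K.pts) (y : EuclideanSpace ℝ (Fin n)) :
    J.l + dist y J.center ≤ (1 + √n) * (K.l + dist y K.center) := by
  have := dist_triangle y K.center J.center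
  have := dist_comm K.center J.center ▸ dist_center_le hK hc
  nlinarith [Real.sqrt_nonneg n, dist_nonneg (x := y) (y := K.center)]

lemma l_add_dist_center_le_of_notMem_dilate_two {J K : QCube n} (hJ : 0 ≤ J.l)
    (hK : 0 ≤ K.l) (hc : J.center ∈ K.pts) {y : EuclideanSpace ℝ (Fin n)}
    (hy : y ∉ (K.dilate 2).pts) :
    K.l + dist y K.center ≤ (3 + 2 * √n) * (J.l + dist y J.center) := by
  have := dist_triangle y J.center K.center
  have := dist_center_le hK hc
  have := half_l_le_dist_of_notMem_dilate_two hc hy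
  nlinarith [Real.sqrt_nonneg n]

end QCube

open QCube

section Poisson

variable {n : ℕ} {α : ℝ} {μ : Measure (EuclideanSpace ℝ (Fin n))}

lemma poissonM_one_div_side {Q : QCube n} (hQ : 0 < Q.l) :
    poissonM α 1 Q μ / ENNReal.ofReal Q.l
      = ∫⁻ y, ENNReal.ofReal (1 / (Q.l + dist y Q.center) ^ ((n : ℝ) + 1 - α)) ∂μ := by
  rw [poissonM, ENNReal.div_eq_inv_mul, ← lintegral_const_mul' _ _ (by simpa using hQ),
    ← ENNReal.ofReal_inv_of_pos hQ]
  congr 1 with y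
  rw [← ENNReal.ofReal_mul (by positivity), Real.rpow_one, inv_mul_eq_div,
    div_div_cancel_left' hQ.ne', one_div]

lemma poissonM_one_div_side_le_of_pts_subset (hn : 0 < n) (hα : α ≤ n + 1) {J K : QCube n}
    (hJ : 0 < J.l) (hK : 0 < K.l) (hJK : J.pts ⊆ K.pts) :
    poissonM α 1 K μ / ENNReal.ofReal K.l
      ≤ ENNReal.ofReal ((1 + √n) ^ ((n : ℝ) + 1 - α)) *
        (poissonM α 1 J μ / ENNReal.ofReal J.l) := by
  rw [poissonM_one_div_side hJ, poissonM_one_div_side hK]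
  exact lintegral_ofReal_one_div_rpow_le (by linarith) (by positivity) (fun _ => by positivity)
    (fun _ => by positivity) <| .of_forall <|
      l_add_dist_center_le hK.le (l_le_of_pts_subset hn hJ hJK) (hJK (center_mem_pts hJ))

lemma poissonM_one_div_side_le_of_dilate_two_null (hα : α ≤ n + 1) {J K : QCube n}
    (hJ : 0 < J.l) (hK : 0 < K.l) (hJK : J.pts ⊆ K.pts) (hμ : μ (K.dilate 2).pts = 0) :
    poissonM α 1 J μ / ENNReal.ofReal J.l
      ≤ ENNReal.ofReal ((3 + 2 * √n) ^ ((n : ℝ) + 1 - α)) *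
        (poissonM α 1 K μ / ENNReal.ofReal K.l) := by
  rw [poissonM_one_div_side hJ, poissonM_one_div_side hK]
  refine lintegral_ofReal_one_div_rpow_le (by linarith) (by positivity) (fun _ => by positivity)
    (fun _ => by positivity) ?_
  filter_upwards [measure_eq_zero_iff_ae_notMem.mp hμ] with y hy
  exact l_add_dist_center_le_of_notMem_dilate_two hJ.le hK.le (hJK (center_mem_pts hJ)) hy

end Poisson

theorem statement9_general (n : ℕ) (α : ℝ) (hn : 1 ≤ n) (hαn : α < n) :
    ∃ c C : ℝ, 0 < c ∧ 0 < C ∧ c ≤ C ∧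
      ∀ μ : Measure (EuclideanSpace ℝ (Fin n)), IsLocallyFiniteMeasure μ →
        (∀ J K I : QCube n, 0 < J.l → 0 < K.l → 0 < I.l →
          J.pts ⊆ K.pts → (K.dilate 2).pts ⊆ I.pts → μ I.pts = 0 →
          ENNReal.ofReal c * (poissonM α 1 J μ / ENNReal.ofReal J.l)
              ≤ poissonM α 1 K μ / ENNReal.ofReal K.l ∧
            poissonM α 1 K μ / ENNReal.ofReal K.l
              ≤ ENNReal.ofReal C * (poissonM α 1 J μ / ENNReal.ofReal J.l)) ∧
        (∀ J K I : QCube n, 0 < J.l → 0 < K.l → 0 < I.l →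
          (J.dilate 2).pts ⊆ K.pts → K.pts ⊆ I.pts → μ I.pts = 0 →
          poissonM α 1 K μ / ENNReal.ofReal K.l
            ≤ ENNReal.ofReal C * (poissonM α 1 J μ / ENNReal.ofReal J.l)) := by
  have hα : α ≤ n + 1 := by linarith
  set p : ℝ := n + 1 - α
  have hp : 0 ≤ p := by linarith
  have hA : 1 ≤ (3 + 2 * √n) ^ p := Real.one_le_rpow (by linarith [Real.sqrt_nonneg n]) hp
  have hB : 1 ≤ (1 + √n) ^ p := Real.one_le_rpow (by linarith [Real.sqrt_nonneg n]) hp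
  have hA₀ : 0 < (3 + 2 * √n) ^ p := one_pos.trans_le hA
  refine ⟨((3 + 2 * √n) ^ p)⁻¹, (1 + √n) ^ p, inv_pos.mpr hA₀, one_pos.trans_le hB,
    (inv_le_one_of_one_le₀ hA).trans hB, fun μ _ => ⟨?_, ?_⟩⟩
  · intro J K I hJ hK _ hJK hKI hI
    refine ⟨?_, poissonM_one_div_side_le_of_pts_subset hn hα hJ hK hJK⟩
    rw [ENNReal.ofReal_inv_of_pos hA₀,
      ENNReal.inv_mul_le_iff (ENNReal.ofReal_pos.mpr hA₀).ne' ENNReal.ofReal_ne_top]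
    exact poissonM_one_div_side_le_of_dilate_two_null hα hJ hK hJK (measure_mono_null hKI hI)
  · intro J K I hJ hK _ h2JK _ _
    exact poissonM_one_div_side_le_of_pts_subset hn hα hJ hK
      ((pts_subset_dilate_two J).trans h2JK)

/-- Comparability of Poisson averages for nested cubes away from the
support: (i) if `J ⊆ K`, `2K ⊆ I` and `μ(I) = 0` then
`c · P^α(J,μ)/ℓ(J) ≤ P^α(K,μ)/ℓ(K) ≤ C · P^α(J,μ)/ℓ(J)`; (ii) if `2J ⊆ K ⊆ I` and
`μ(I) = 0` then `P^α(K,μ)/ℓ(K) ≤ C · P^α(J,μ)/ℓ(J)`; with `0 < c ≤ C` depending only on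
`n` and `α`. -/
theorem statement9 (n : ℕ) (α : ℝ) (hn : 1 ≤ n) (hα0 : 0 ≤ α) (hαn : α < n) :
    ∃ c C : ℝ, 0 < c ∧ 0 < C ∧ c ≤ C ∧
      ∀ μ : Measure (EuclideanSpace ℝ (Fin n)), IsLocallyFiniteMeasure μ →
        (∀ J K I : QCube n, 0 < J.l → 0 < K.l → 0 < I.l →
          J.pts ⊆ K.pts → (K.dilate 2).pts ⊆ I.pts → μ I.pts = 0 →
          ENNReal.ofReal c * (poissonM α 1 J μ / ENNReal.ofReal J.l)
              ≤ poissonM α 1 K μ / ENNReal.ofReal K.l ∧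
            poissonM α 1 K μ / ENNReal.ofReal K.l
              ≤ ENNReal.ofReal C * (poissonM α 1 J μ / ENNReal.ofReal J.l)) ∧
        (∀ J K I : QCube n, 0 < J.l → 0 < K.l → 0 < I.l →
          (J.dilate 2).pts ⊆ K.pts → K.pts ⊆ I.pts → μ I.pts = 0 →
          poissonM α 1 K μ / ENNReal.ofReal K.l
            ≤ ENNReal.ofReal C * (poissonM α 1 J μ / ENNReal.ofReal J.l)) :=
  statement9_general n α hn hαn
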